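/- arXiv:2007.09392 — 5 statements merged into one kernel-verified Lean document; each statement's English description precedes it below -/
import Mathlib

section
/- Let d ≥ 1 be an integer, (M, ρ) a metric space, and μ a Borel measure on M with μ(B(x,α)) ≤ c₀ α^d for every x ∈ M and α > 0, where B(x,α) = {y : ρ(x,y) ≤ α}. Let κ ≥ d+1, n ≥ 1, x ∈ M, and suppose G : M → ℂ is measurable with |G(y)| ≤ c n^d / (1 + n ρ(x,y))^κ for every y ∈ M. Then for every 1 ≤ p ≤ ∞, ‖G‖_{L_p(μ)} ≤ C n^{d(1−1/p)}, where C depends only on d, p, κ, c and c₀. -/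
open MeasureTheory ENNReal

/-!
For each `y` choose `m` with `n ρ(x,y) ≤ 2^m ≤ 2 (1 + n ρ(x,y))`: then `y ∈ B(x, 2^m/n)` and
`(1 + n ρ(x,y))^(-κ) ≤ 2^κ 2^(-mκ)`. So the weight `(1 + n ρ(x,·))^(-κ)` is dominated by
`∑ₘ 2^κ 2^(-mκ) 𝟙_{B(x, 2^m/n)}`, whose integral is at most `∑ₘ c₀ 2^κ n^(-d) 2^(m(d-κ))`,
a geometric series since `κ > d`. As the weight is at most `1`, its `p`-th power is dominated by
itself, whence `‖G‖_p ≤ c n^d (∫ (1 + n ρ(x,·))^(-κ) dμ)^(1/p) ≲ n^(d(1-1/p))`.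
-/

theorem exists_two_pow_between {r : ℝ} (hr : 0 ≤ r) :
    ∃ m : ℕ, r ≤ 2 ^ m ∧ (2 : ℝ) ^ m ≤ 2 * (1 + r) := by
  obtain ⟨m, hm, hm'⟩ := exists_nat_pow_near (x := 1 + r) (by linarith) one_lt_two
  exact ⟨m + 1, by linarith, by rw [pow_succ']; linarith⟩

theorem one_add_rpow_neg_le_of_two_pow_le {r κ : ℝ} {m : ℕ} (hκ : 0 ≤ κ)
    (hm : (2 : ℝ) ^ m ≤ 2 * (1 + r)) : (1 + r) ^ (-κ) ≤ 2 ^ κ * (2 ^ (-κ)) ^ m := by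
  have h : (2 : ℝ) ^ κ * (2 ^ (-κ)) ^ m = (2 ^ m / 2) ^ (-κ) := by
    rw [Real.div_rpow (by positivity) zero_le_two, ← Real.rpow_natCast, ← Real.rpow_mul zero_le_two,
      ← Real.rpow_natCast, ← Real.rpow_mul zero_le_two, Real.rpow_neg zero_le_two κ,
      mul_comm (m : ℝ), div_inv_eq_mul, mul_comm]
  rw [h]
  exact Real.rpow_le_rpow_of_nonpos (by positivity) (by linarith) (by linarith)

theorem ofReal_one_add_mul_dist_rpow_neg_le_tsum {M : Type*} [PseudoMetricSpace M] {κ n : ℝ}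
    (hκ : 0 ≤ κ) (hn : 0 < n) (x y : M) :
    ENNReal.ofReal ((1 + n * dist x y) ^ (-κ)) ≤
      ∑' m : ℕ, (Metric.closedBall x (2 ^ m / n)).indicator
        (fun _ ↦ ENNReal.ofReal (2 ^ κ * (2 ^ (-κ)) ^ m)) y := by
  obtain ⟨m, hm, hm'⟩ := exists_two_pow_between (by positivity : 0 ≤ n * dist x y)
  have hy : y ∈ Metric.closedBall x (2 ^ m / n) := by
    rw [Metric.mem_closedBall, dist_comm, le_div_iff₀ hn]
    linarith
  refine le_trans ?_ (ENNReal.le_tsum m)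
  rw [Set.indicator_of_mem hy]
  exact ENNReal.ofReal_le_ofReal (one_add_rpow_neg_le_of_two_pow_le hκ hm')

theorem lintegral_one_add_mul_dist_rpow_neg_le {M : Type*} [PseudoMetricSpace M]
    [MeasurableSpace M] [OpensMeasurableSpace M] {μ : Measure M} {d : ℕ} {c₀ κ n : ℝ}
    (hμ : ∀ (x : M) (α : ℝ), 0 < α → μ (Metric.closedBall x α) ≤ ENNReal.ofReal (c₀ * α ^ d))
    (hκ : d < κ) (hn : 0 < n) (x : M) :
    ∫⁻ y, ENNReal.ofReal ((1 + n * dist x y) ^ (-κ)) ∂μ ≤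
      ENNReal.ofReal (c₀ * 2 ^ κ / (1 - 2 ^ ((d : ℝ) - κ)) * n ^ (-(d : ℝ))) := by
  have hκ₀ : 0 ≤ κ := (Nat.cast_nonneg d).trans hκ.le
  set r : ℝ := 2 ^ ((d : ℝ) - κ) with hr_def
  have hr : r = 2 ^ d * 2 ^ (-κ) := by
    rw [hr_def, sub_eq_add_neg, Real.rpow_add two_pos, Real.rpow_natCast]
  have hr₀ : 0 ≤ r := by positivity
  have hr₁ : r < 1 := Real.rpow_lt_one_of_one_lt_of_neg one_lt_two (by linarith)
  have hterm : ∀ m : ℕ,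
      ENNReal.ofReal (2 ^ κ * (2 ^ (-κ)) ^ m) * μ (Metric.closedBall x (2 ^ m / n)) ≤
        ENNReal.ofReal (c₀ * 2 ^ κ * n ^ (-(d : ℝ))) * ENNReal.ofReal r ^ m := by
    intro m
    calc _ ≤ ENNReal.ofReal (2 ^ κ * (2 ^ (-κ)) ^ m) * ENNReal.ofReal (c₀ * (2 ^ m / n) ^ d) := by
          gcongr
          exact hμ x _ (by positivity)
      _ = ENNReal.ofReal (c₀ * 2 ^ κ * n ^ (-(d : ℝ)) * r ^ m) := by
          rw [← ENNReal.ofReal_mul (by positivity), hr, Real.rpow_neg hn.le, Real.rpow_natCast]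
          ring_nf
      _ = _ := by rw [ENNReal.ofReal_mul' (by positivity), ENNReal.ofReal_pow hr₀]
  calc ∫⁻ y, ENNReal.ofReal ((1 + n * dist x y) ^ (-κ)) ∂μ
      ≤ ∫⁻ y, ∑' m : ℕ, (Metric.closedBall x (2 ^ m / n)).indicator
          (fun _ ↦ ENNReal.ofReal (2 ^ κ * (2 ^ (-κ)) ^ m)) y ∂μ :=
        lintegral_mono fun y ↦ ofReal_one_add_mul_dist_rpow_neg_le_tsum hκ₀ hn x y
    _ = ∑' m : ℕ,
          ENNReal.ofReal (2 ^ κ * (2 ^ (-κ)) ^ m) * μ (Metric.closedBall x (2 ^ m / n)) := by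
        rw [lintegral_tsum fun m ↦
          (measurable_const.indicator Metric.isClosed_closedBall.measurableSet).aemeasurable]
        simp only [lintegral_indicator_const Metric.isClosed_closedBall.measurableSet]
    _ ≤ ∑' m : ℕ, ENNReal.ofReal (c₀ * 2 ^ κ * n ^ (-(d : ℝ))) * ENNReal.ofReal r ^ m :=
        ENNReal.tsum_le_tsum hterm
    _ = ENNReal.ofReal (c₀ * 2 ^ κ * n ^ (-(d : ℝ))) * ENNReal.ofReal (1 - r)⁻¹ := by
        rw [ENNReal.tsum_mul_left, ENNReal.tsum_geometric, ENNReal.ofReal_inv_of_pos (by linarith),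
          ENNReal.ofReal_sub _ hr₀, ENNReal.ofReal_one]
    _ = _ := by
        rw [← ENNReal.ofReal_mul' (inv_pos.2 (sub_pos.2 hr₁)).le]
        ring_nf

theorem eLpNorm_le_mul_lintegral_rpow {α ε : Type*} [MeasurableSpace α] [ENorm ε]
    {μ : Measure α} {p A : ℝ≥0∞} {f : α → ε} {h : α → ℝ≥0∞} (hp : 1 ≤ p) (hA : A ≠ ∞)
    (hh : ∀ y, h y ≤ 1) (hf : ∀ y, ‖f y‖ₑ ≤ A * h y) :
    eLpNorm f p μ ≤ A * (∫⁻ y, h y ∂μ) ^ (1 / p.toReal) := by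
  rcases eq_or_ne p ∞ with rfl | hp_top
  · rw [eLpNorm_exponent_top, toReal_top, _root_.div_zero, rpow_zero, mul_one]
    exact eLpNormEssSup_le_of_ae_enorm_bound
      (ae_of_all _ fun y ↦ (hf y).trans (mul_le_of_le_one_right' (hh y)))
  set q := p.toReal
  have hq : 1 ≤ q := by simpa using ENNReal.toReal_mono hp_top hp
  have hq₀ : 0 < q := one_pos.trans_le hq
  have hpoint : ∀ y, ‖f y‖ₑ ^ q ≤ A ^ q * h y := fun y ↦
    calc ‖f y‖ₑ ^ q ≤ (A * h y) ^ q := ENNReal.rpow_le_rpow (hf y) hq₀.le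
      _ = A ^ q * h y ^ q := ENNReal.mul_rpow_of_nonneg _ _ hq₀.le
      _ ≤ A ^ q * h y := by gcongr; exact ENNReal.rpow_le_self_of_le_one (hh y) hq
  rw [eLpNorm_eq_lintegral_rpow_enorm_toReal (one_pos.trans_le hp).ne' hp_top]
  calc (∫⁻ y, ‖f y‖ₑ ^ q ∂μ) ^ (1 / q) ≤ (∫⁻ y, A ^ q * h y ∂μ) ^ (1 / q) :=
        ENNReal.rpow_le_rpow (lintegral_mono hpoint) (by positivity)
    _ = A * (∫⁻ y, h y ∂μ) ^ (1 / q) := by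
        rw [lintegral_const_mul' _ _ (ENNReal.rpow_ne_top_of_nonneg hq₀.le hA),
          ENNReal.mul_rpow_of_nonneg _ _ (by positivity), ← ENNReal.rpow_mul,
          mul_one_div_cancel hq₀.ne', ENNReal.rpow_one]

theorem ofReal_mul_rpow_mul_ofReal_mul_rpow_neg_le {c K n s t : ℝ} (hn : 0 < n) (ht₀ : 0 ≤ t)
    (ht₁ : t ≤ 1) :
    ENNReal.ofReal (c * n ^ s) * ENNReal.ofReal (K * n ^ (-s)) ^ t ≤
      ENNReal.ofReal (max c 1 * max K 1 * n ^ (s * (1 - t))) := by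
  have hK : max K 1 ^ t ≤ max K 1 := by
    simpa using Real.rpow_le_rpow_of_exponent_le (le_max_right K 1) ht₁
  calc _ ≤ ENNReal.ofReal (max c 1 * n ^ s) * ENNReal.ofReal (max K 1 * n ^ (-s)) ^ t := by
        gcongr <;> simp
    _ = ENNReal.ofReal (max c 1 * max K 1 ^ t * n ^ (s * (1 - t))) := by
        rw [ENNReal.ofReal_rpow_of_nonneg (by positivity) ht₀, ← ENNReal.ofReal_mul (by positivity),
          Real.mul_rpow (by positivity) (by positivity), ← Real.rpow_mul hn.le, mul_sub, mul_one,
          sub_eq_add_neg, Real.rpow_add hn, neg_mul]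
        ring_nf
    _ ≤ _ := by gcongr

theorem enorm_le_ofReal_mul_ofReal_rpow_neg {E : Type*} [NormedAddCommGroup E] {v : E}
    {a b κ : ℝ} (hb : 0 ≤ b) (hv : ‖v‖ ≤ a / b ^ κ) :
    ‖v‖ₑ ≤ ENNReal.ofReal a * ENNReal.ofReal (b ^ (-κ)) := by
  rw [← ofReal_norm, ← ENNReal.ofReal_mul' (by positivity), Real.rpow_neg hb, ← div_eq_mul_inv]
  exact ENNReal.ofReal_le_ofReal hv

theorem localized_kernel_Lp_norm_bound_general
    (d : ℕ) (p : ℝ≥0∞) (hp : 1 ≤ p)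
    (κ c c₀ : ℝ) (hκ : (d : ℝ) + 1 ≤ κ) :
    ∃ C : ℝ, 0 < C ∧
      ∀ (M : Type) [MetricSpace M] [MeasurableSpace M] [BorelSpace M]
        (μ : Measure M),
        (∀ (x : M) (α : ℝ), 0 < α →
            μ (Metric.closedBall x α) ≤ ENNReal.ofReal (c₀ * α ^ d)) →
        ∀ (n : ℝ), 1 ≤ n →
        ∀ (x : M) (G : M → ℂ), Measurable G →
        (∀ y : M, ‖G y‖ ≤ c * n ^ d / (1 + n * dist x y) ^ κ) →
        eLpNorm G p μ ≤ ENNReal.ofReal (C * n ^ ((d : ℝ) * (1 - 1 / p.toReal))) := by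
  set K := c₀ * 2 ^ κ / (1 - 2 ^ ((d : ℝ) - κ))
  refine ⟨max c 1 * max K 1, by positivity, fun M _ _ _ μ hμ n hn x G _ hG ↦ ?_⟩
  have hn₀ : 0 < n := one_pos.trans_le hn
  have ht₁ : 1 / p.toReal ≤ 1 := by
    rcases eq_or_ne p ∞ with rfl | hp_top
    · simp
    · exact div_le_one_of_le₀ (by simpa using ENNReal.toReal_mono hp_top hp) ENNReal.toReal_nonneg
  have hdecay_le_one : ∀ y, ENNReal.ofReal ((1 + n * dist x y) ^ (-κ)) ≤ 1 := fun y ↦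
    ENNReal.ofReal_le_one.2 (Real.rpow_le_one_of_one_le_of_nonpos
      (le_add_of_nonneg_right (by positivity)) (by linarith [(Nat.cast_nonneg d : (0 : ℝ) ≤ d)]))
  calc eLpNorm G p μ
      ≤ ENNReal.ofReal (c * n ^ d) * (∫⁻ y, ENNReal.ofReal ((1 + n * dist x y) ^ (-κ)) ∂μ) ^
          (1 / p.toReal) :=
        eLpNorm_le_mul_lintegral_rpow hp ofReal_ne_top hdecay_le_one
          fun y ↦ enorm_le_ofReal_mul_ofReal_rpow_neg (by positivity) (hG y)
    _ ≤ ENNReal.ofReal (c * n ^ (d : ℝ)) *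
          ENNReal.ofReal (K * n ^ (-(d : ℝ))) ^ (1 / p.toReal) := by
        rw [Real.rpow_natCast]
        gcongr
        exact lintegral_one_add_mul_dist_rpow_neg_le hμ (by linarith) hn₀ x
    _ ≤ _ := ofReal_mul_rpow_mul_ofReal_mul_rpow_neg_le hn₀ (by positivity) ht₁

/-- `L_p`-norm estimate for a localized kernel: if `μ(B(x,α)) ≤ c₀ α^d`
and `|G(y)| ≤ c n^d / (1 + n ρ(x,y))^κ` with `κ ≥ d+1`, then
`‖G‖_{L_p(μ)} ≤ C n^{d(1−1/p)}` with `C` depending only on `d, p, κ, c, c₀`. -/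
theorem localized_kernel_Lp_norm_bound
    (d : ℕ) (hd : 1 ≤ d) (p : ℝ≥0∞) (hp : 1 ≤ p)
    (κ c c₀ : ℝ) (hκ : (d : ℝ) + 1 ≤ κ) (hc : 0 ≤ c) (hc₀ : 0 ≤ c₀) :
    ∃ C : ℝ, 0 < C ∧
      ∀ (M : Type) [MetricSpace M] [MeasurableSpace M] [BorelSpace M]
        (μ : Measure M),
        (∀ (x : M) (α : ℝ), 0 < α →
            μ (Metric.closedBall x α) ≤ ENNReal.ofReal (c₀ * α ^ d)) →
        ∀ (n : ℝ), 1 ≤ n →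
        ∀ (x : M) (G : M → ℂ), Measurable G →
        (∀ y : M, ‖G y‖ ≤ c * n ^ d / (1 + n * dist x y) ^ κ) →
        eLpNorm G p μ ≤ ENNReal.ofReal (C * n ^ ((d : ℝ) * (1 - 1 / p.toReal))) :=
  localized_kernel_Lp_norm_bound_general d p hp κ c c₀ hκ
end

section
/- Let (M, ρ) be a metric space of diameter at most R < ∞, let d ≥ 1 be an integer, n ≥ 1, and let x₁,…,x_N ∈ M and w₁,…,w_N ≥ 0 be weights such that for every x₀ ∈ M, every β ≥ 0 and every α ≥ 1/n one has Σ_{i : β < ρ(x₀,x_i) ≤ β+α} w_i ≤ c₁ ((β+α)^d − β^d), and Σ_{i : ρ(x₀,x_i) ≤ α} w_i ≤ c₁ α^d. Then there exists a constant C depending only on d, c₁ and R such that for every real ℓ ≥ n, sup_{x ∈ M} Σ_{i=1}^N w_i · ℓ^d / (1 + ℓ ρ(x, x_i))^{d+1} ≤ C (ℓ/n)^d. -/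
/-!
Sort the nodes into shells of width `1/n` around `x₀`: node `i` lies in shell
`j = max 1 ⌈n ρᵢ⌉`. Since `ℓ ≥ n`, every node of shell `j` has `1 + ℓ ρᵢ ≥ j`, while the
annulus bound gives shell `j` weight at most `c₁ ((j/n)^d - ((j-1)/n)^d) ≤ c₁ d j^(d-1) / n^d`.
So shell `j` contributes at most `c₁ d (ℓ/n)^d / j²`, and `∑ 1/j² ≤ 2`.
-/

open Finset

noncomputable def shellIndex (n r : ℝ) : ℕ := max 1 ⌈n * r⌉₊

lemma one_le_shellIndex (n r : ℝ) : 1 ≤ shellIndex n r := le_max_left _ _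

lemma shellIndex_le_one_add_mul {n ℓ r : ℝ} (hn : 0 ≤ n) (hnℓ : n ≤ ℓ) (hr : 0 ≤ r) :
    (shellIndex n r : ℝ) ≤ 1 + ℓ * r := by
  rw [shellIndex, Nat.cast_max, Nat.cast_one, max_le_iff]
  constructor
  · nlinarith
  · have := Nat.ceil_lt_add_one (mul_nonneg hn hr)
    nlinarith

lemma le_div_of_shellIndex_eq {n r : ℝ} {j : ℕ} (hn : 0 < n) (h : shellIndex n r = j) :
    r ≤ j / n := by
  rw [le_div_iff₀ hn, mul_comm]
  exact Nat.ceil_le.mp (h ▸ le_max_right _ _)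

lemma div_lt_of_shellIndex_eq {n r : ℝ} {j : ℕ} (hn : 0 < n) (h : shellIndex n r = j)
    (hj : 2 ≤ j) : ((j : ℝ) - 1) / n < r := by
  have hceil : ⌈n * r⌉₊ = j := by
    rw [shellIndex] at h
    omega
  have : j - 1 < ⌈n * r⌉₊ := by omega
  rw [Nat.lt_ceil, Nat.cast_sub (by omega), Nat.cast_one] at this
  rwa [div_lt_iff₀ hn, mul_comm]

section ShellDecomposition

variable {ι : Type*} [Fintype ι] {ρ w : ι → ℝ} {d : ℕ} {c₁ n ℓ : ℝ}

lemma sum_shellIndex_eq_le (hw : ∀ i, 0 ≤ w i) (hd : 1 ≤ d) (hc₁ : 0 ≤ c₁) (hn : 0 < n)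
    (hann : ∀ β α : ℝ, 0 ≤ β → 1 / n ≤ α →
      ∑ i with β < ρ i ∧ ρ i ≤ β + α, w i ≤ c₁ * ((β + α) ^ d - β ^ d))
    (hball : ∀ α : ℝ, 1 / n ≤ α → ∑ i with ρ i ≤ α, w i ≤ c₁ * α ^ d)
    {j : ℕ} (hj : 1 ≤ j) :
    ∑ i with shellIndex n (ρ i) = j, w i ≤ c₁ * d * j ^ (d - 1) / n ^ d := by
  have hshell : ∑ i with shellIndex n (ρ i) = j, w i
      ≤ c₁ * ((j / n) ^ d - ((j - 1) / n) ^ d) := by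
    obtain rfl | hj2 := hj.eq_or_lt
    · have hsub : univ.filter (fun i => shellIndex n (ρ i) = 1) ⊆ univ.filter (ρ · ≤ 1 / n) :=
        fun i hi => mem_filter.mpr ⟨mem_univ _, by
          simpa using le_div_of_shellIndex_eq hn (mem_filter.mp hi).2⟩
      calc _ ≤ ∑ i with ρ i ≤ 1 / n, w i := sum_le_sum_of_subset_of_nonneg hsub fun i _ _ => hw i
        _ ≤ c₁ * (1 / n) ^ d := hball _ le_rfl
        _ = _ := by simp [zero_pow (by omega : d ≠ 0)]
    · have hsub : univ.filter (fun i => shellIndex n (ρ i) = j)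
          ⊆ univ.filter (fun i => (j - 1) / n < ρ i ∧ ρ i ≤ (j - 1) / n + 1 / n) := fun i hi => by
        have hi := (mem_filter.mp hi).2
        refine mem_filter.mpr ⟨mem_univ _, div_lt_of_shellIndex_eq hn hi hj2, ?_⟩
        rw [← add_div, sub_add_cancel]
        exact le_div_of_shellIndex_eq hn hi
      have hβ : (0 : ℝ) ≤ (j - 1) / n := by
        have : (1 : ℝ) ≤ j := by exact_mod_cast hj
        exact div_nonneg (by linarith) hn.le
      calc _ ≤ _ := sum_le_sum_of_subset_of_nonneg hsub fun i _ _ => hw i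
        _ ≤ _ := hann _ _ hβ le_rfl
        _ = _ := by rw [← add_div, sub_add_cancel]
  have hdiff : ((j : ℝ) / n) ^ d - ((j - 1) / n) ^ d ≤ 1 / n * d * (j / n) ^ (d - 1) := by
    have hj' : (1 : ℝ) ≤ j := by exact_mod_cast hj
    refine (le_abs_self _).trans ((abs_pow_sub_pow_le _ _ d).trans_eq ?_)
    rw [← sub_div, sub_sub_cancel, abs_of_pos (by positivity),
      max_eq_left (by gcongr; linarith), abs_of_pos (by positivity)]
  calc _ ≤ c₁ * (1 / n * d * (j / n) ^ (d - 1)) := hshell.trans (by gcongr)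
    _ = c₁ * d * j ^ (d - 1) / (n ^ (d - 1) * n) := by rw [div_pow]; field_simp
    _ = c₁ * d * j ^ (d - 1) / n ^ d := by rw [pow_sub_one_mul (by omega)]

lemma sum_shellIndex_eq_localization_le (hρ : ∀ i, 0 ≤ ρ i) (hw : ∀ i, 0 ≤ w i) (hd : 1 ≤ d)
    (hc₁ : 0 ≤ c₁) (hn : 0 < n) (hnℓ : n ≤ ℓ)
    (hann : ∀ β α : ℝ, 0 ≤ β → 1 / n ≤ α →
      ∑ i with β < ρ i ∧ ρ i ≤ β + α, w i ≤ c₁ * ((β + α) ^ d - β ^ d))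
    (hball : ∀ α : ℝ, 1 / n ≤ α → ∑ i with ρ i ≤ α, w i ≤ c₁ * α ^ d)
    {j : ℕ} (hj : 1 ≤ j) :
    ∑ i with shellIndex n (ρ i) = j, w i * ℓ ^ d / (1 + ℓ * ρ i) ^ (d + 1)
      ≤ c₁ * d * (ℓ / n) ^ d * ((j : ℝ) ^ 2)⁻¹ := by
  have hj' : (0 : ℝ) < j := by exact_mod_cast hj
  have hℓ : 0 ≤ ℓ := hn.le.trans hnℓ
  have hterm : ∀ i ∈ univ.filter (fun i => shellIndex n (ρ i) = j),
      w i * ℓ ^ d / (1 + ℓ * ρ i) ^ (d + 1) ≤ ℓ ^ d / (j : ℝ) ^ (d + 1) * w i := by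
    intro i hi
    have hji : (j : ℝ) ≤ 1 + ℓ * ρ i :=
      (mem_filter.mp hi).2 ▸ shellIndex_le_one_add_mul hn.le hnℓ (hρ i)
    have := hw i
    rw [mul_comm, mul_div_right_comm]
    gcongr
  calc _ ≤ ℓ ^ d / (j : ℝ) ^ (d + 1) * ∑ i with shellIndex n (ρ i) = j, w i := by
        rw [mul_sum]; exact sum_le_sum hterm
    _ ≤ ℓ ^ d / (j : ℝ) ^ (d + 1) * (c₁ * d * j ^ (d - 1) / n ^ d) := by
        gcongr; exact sum_shellIndex_eq_le hw hd hc₁ hn hann hball hj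
    _ = _ := by
        obtain ⟨e, rfl⟩ : ∃ e, d = e + 1 := ⟨d - 1, by omega⟩
        rw [Nat.add_sub_cancel, div_pow]
        field_simp
        ring

theorem sum_localization_le (hρ : ∀ i, 0 ≤ ρ i) (hw : ∀ i, 0 ≤ w i) (hd : 1 ≤ d)
    (hc₁ : 0 ≤ c₁) (hn : 0 < n) (hnℓ : n ≤ ℓ)
    (hann : ∀ β α : ℝ, 0 ≤ β → 1 / n ≤ α →
      ∑ i with β < ρ i ∧ ρ i ≤ β + α, w i ≤ c₁ * ((β + α) ^ d - β ^ d))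
    (hball : ∀ α : ℝ, 1 / n ≤ α → ∑ i with ρ i ≤ α, w i ≤ c₁ * α ^ d) :
    ∑ i, w i * ℓ ^ d / (1 + ℓ * ρ i) ^ (d + 1) ≤ 2 * c₁ * d * (ℓ / n) ^ d := by
  set J := univ.sup fun i => shellIndex n (ρ i)
  have hmaps : ∀ i ∈ univ, shellIndex n (ρ i) ∈ Ioo 0 (J + 1) := fun i _ =>
    mem_Ioo.mpr ⟨one_le_shellIndex _ _,
      Nat.lt_succ_of_le (le_sup (f := fun i => shellIndex n (ρ i)) (mem_univ i))⟩
  rw [← sum_fiberwise_of_maps_to hmaps]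
  calc _ ≤ ∑ j ∈ Ioo 0 (J + 1), c₁ * d * (ℓ / n) ^ d * ((j : ℝ) ^ 2)⁻¹ :=
        sum_le_sum fun j hj => sum_shellIndex_eq_localization_le hρ hw hd hc₁ hn hnℓ hann hball
          (mem_Ioo.mp hj).1
    _ ≤ c₁ * d * (ℓ / n) ^ d * (2 / ((0 : ℕ) + 1)) := by
        rw [← mul_sum]
        have hℓ := hn.trans_le hnℓ
        gcongr
        exact sum_Ioo_inv_sq_le 0 (J + 1)
    _ = _ := by push_cast; ring

end ShellDecomposition

theorem quadrature_localization_estimate_general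
    (d : ℕ) (hd : 1 ≤ d) (c₁ R : ℝ) (hc₁ : 0 ≤ c₁) :
    ∃ C : ℝ, 0 < C ∧
      ∀ (M : Type) [MetricSpace M],
        (∀ x y : M, dist x y ≤ R) →
        ∀ (n : ℝ), 1 ≤ n →
        ∀ (N : ℕ) (x : Fin N → M) (w : Fin N → ℝ),
        (∀ i, 0 ≤ w i) →
        -- annulus bound
        (∀ (x₀ : M) (β α : ℝ), 0 ≤ β → 1 / n ≤ α →
            ∑ i ∈ Finset.univ.filter
                (fun i => β < dist x₀ (x i) ∧ dist x₀ (x i) ≤ β + α), w i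
              ≤ c₁ * ((β + α) ^ d - β ^ d)) →
        -- ball bound
        (∀ (x₀ : M) (α : ℝ), 1 / n ≤ α →
            ∑ i ∈ Finset.univ.filter (fun i => dist x₀ (x i) ≤ α), w i
              ≤ c₁ * α ^ d) →
        ∀ (ℓ : ℝ), n ≤ ℓ →
        ∀ x₀ : M,
          ∑ i, w i * ℓ ^ d / (1 + ℓ * dist x₀ (x i)) ^ (d + 1)
            ≤ C * (ℓ / n) ^ d := by
  refine ⟨2 * c₁ * d + 1, by positivity, ?_⟩
  intro M _ _ n hn N x w hw hann hball ℓ hnℓ x₀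
  have hn0 : 0 < n := one_pos.trans_le hn
  calc _ ≤ 2 * c₁ * d * (ℓ / n) ^ d :=
        sum_localization_le (fun _ => dist_nonneg) hw hd hc₁ hn0 hnℓ (hann x₀) (hball x₀)
    _ ≤ _ := by
        have hℓ := hn0.trans_le hnℓ
        exact mul_le_mul_of_nonneg_right (le_add_of_nonneg_right zero_le_one) (by positivity)

/-- quadrature-weight estimate for the localization majorant
`A_ℓ(θ) = ℓ^d/(1+ℓθ)^{d+1}`: under annulus and ball weight bounds, for every `ℓ ≥ n`,
`sup_x Σ_i w_i ℓ^d/(1+ℓ ρ(x,x_i))^{d+1} ≤ C (ℓ/n)^d`, with `C` depending only on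
`d`, `c₁` and the diameter bound `R`. -/
theorem quadrature_localization_estimate
    (d : ℕ) (hd : 1 ≤ d) (c₁ R : ℝ) (hc₁ : 0 ≤ c₁) (hR : 0 ≤ R) :
    ∃ C : ℝ, 0 < C ∧
      ∀ (M : Type) [MetricSpace M],
        (∀ x y : M, dist x y ≤ R) →
        ∀ (n : ℝ), 1 ≤ n →
        ∀ (N : ℕ) (x : Fin N → M) (w : Fin N → ℝ),
        (∀ i, 0 ≤ w i) →
        -- annulus bound
        (∀ (x₀ : M) (β α : ℝ), 0 ≤ β → 1 / n ≤ α →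
            ∑ i ∈ Finset.univ.filter
                (fun i => β < dist x₀ (x i) ∧ dist x₀ (x i) ≤ β + α), w i
              ≤ c₁ * ((β + α) ^ d - β ^ d)) →
        -- ball bound
        (∀ (x₀ : M) (α : ℝ), 1 / n ≤ α →
            ∑ i ∈ Finset.univ.filter (fun i => dist x₀ (x i) ≤ α), w i
              ≤ c₁ * α ^ d) →
        ∀ (ℓ : ℝ), n ≤ ℓ →
        ∀ x₀ : M,
          ∑ i, w i * ℓ ^ d / (1 + ℓ * dist x₀ (x i)) ^ (d + 1)
            ≤ C * (ℓ / n) ^ d :=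
  quadrature_localization_estimate_general d hd c₁ R hc₁
end

section
/- In the abstract filtered-kernel setting, let n ≥ 1, let ℓ ≥ n be a real number, let d ≥ 1, and suppose K : M × M → ℂ is a bounded measurable kernel such that: (i) ∫_M K(x,z) P(z) dμ(z) = P(x) for every P ∈ Π_ℓ and every x ∈ M; (ii) ∫_M |K(x,z)| dμ(z) ≤ c₂ for every x ∈ M; and (iii) the points x₁,…,x_N ∈ M and weights w₁,…,w_N ≥ 0 satisfy Σ_{i=1}^N w_i |K(x_i, z)| ≤ c₃ (ℓ/n)^d for every z ∈ M. Then for every 1 ≤ p₁ < ∞ and every P ∈ Π_ℓ, Σ_{i=1}^N w_i |P(x_i)|^{p₁} ≤ c₂^{p₁−1} c₃ (ℓ/n)^d ∫_M |P(z)|^{p₁} dμ(z). -/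
/-!
Reproduction gives `P(xᵢ) = ∫ K(xᵢ, z) P(z) dμ(z)`. Hölder's inequality for the measure
`|K(xᵢ, ·)| dμ`, whose mass is at most `c₂`, yields
`|P(xᵢ)|^p ≤ c₂^(p-1) ∫ |K(xᵢ, z)| |P(z)|^p dμ(z)`. Summing with the weights `wᵢ` and
exchanging sum and integral, the discretized kernel bound `Σᵢ wᵢ |K(xᵢ, z)| ≤ c₃ (ℓ/n)^d`
finishes the proof.
-/

open MeasureTheory

section

variable {α : Type*} [MeasurableSpace α] {μ : Measure α}

theorem memLp_ofReal_of_integrable_rpow {h : α → ℝ} {r : ℝ} (hr : 0 < r) (h0 : 0 ≤ h)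
    (hm : AEStronglyMeasurable h μ) (hi : Integrable (fun z => h z ^ r) μ) :
    MemLp h (ENNReal.ofReal r) μ := by
  rw [← integrable_norm_rpow_iff hm (by simpa using hr) (by simp), ENNReal.toReal_ofReal hr.le]
  simpa only [Real.norm_of_nonneg (h0 _)] using hi

theorem integral_mul_rpow_le {F G : α → ℝ} {p : ℝ} (hp : 1 ≤ p) (hF0 : 0 ≤ F) (hG0 : 0 ≤ G)
    (hF : Integrable F μ) (hG : AEStronglyMeasurable G μ)
    (hFG : Integrable (fun z => F z * G z ^ p) μ) :
    (∫ z, F z * G z ∂μ) ^ p ≤ (∫ z, F z ∂μ) ^ (p - 1) * ∫ z, F z * G z ^ p ∂μ := by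
  rcases hp.eq_or_lt with rfl | hp
  · simp
  set q := p.conjExponent
  have hqp : q.HolderConjugate p := (Real.HolderConjugate.conjExponent hp).symm
  have hsum : 1 / q + 1 / p = 1 := by simpa [one_div] using hqp.inv_add_inv_eq_one
  -- Hölder's inequality for `F^(1/q)` and `F^(1/p) G`: the weight `F` is split between the factors.
  set f : α → ℝ := fun z => F z ^ (1 / q)
  set g : α → ℝ := fun z => F z ^ (1 / p) * G z
  have hf0 : 0 ≤ f := fun z => Real.rpow_nonneg (hF0 z) _
  have hg0 : 0 ≤ g := fun z => mul_nonneg (Real.rpow_nonneg (hF0 z) _) (hG0 z)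
  have hfg (z : α) : f z * g z = F z * G z := by
    rw [← mul_assoc, ← Real.rpow_add' (hF0 z) (by rw [hsum]; norm_num), hsum, Real.rpow_one]
  have hfq (z : α) : f z ^ q = F z := by
    rw [← Real.rpow_mul (hF0 z), one_div_mul_cancel hqp.ne_zero, Real.rpow_one]
  have hgp (z : α) : g z ^ p = F z * G z ^ p := by
    rw [Real.mul_rpow (Real.rpow_nonneg (hF0 z) _) (hG0 z), ← Real.rpow_mul (hF0 z),
      one_div_mul_cancel hqp.symm.ne_zero, Real.rpow_one]
  have hroot_meas (r : ℝ) : AEStronglyMeasurable (fun z => F z ^ r) μ :=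
    (hF.aemeasurable.pow_const r).aestronglyMeasurable
  have hf : MemLp f (ENNReal.ofReal q) μ :=
    memLp_ofReal_of_integrable_rpow hqp.pos hf0 (hroot_meas _) (by simpa only [hfq] using hF)
  have hg : MemLp g (ENNReal.ofReal p) μ :=
    memLp_ofReal_of_integrable_rpow hqp.symm.pos hg0 ((hroot_meas _).mul hG)
      (by simpa only [hgp] using hFG)
  have holder := integral_mul_le_Lp_mul_Lq_of_nonneg hqp (.of_forall hf0) (.of_forall hg0) hf hg
  simp only [hfg, hfq, hgp] at holder
  have hI0 : 0 ≤ ∫ z, F z ∂μ := integral_nonneg hF0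
  have hJ0 : 0 ≤ ∫ z, F z * G z ^ p ∂μ := integral_nonneg fun z =>
    mul_nonneg (hF0 z) (Real.rpow_nonneg (hG0 z) p)
  calc (∫ z, F z * G z ∂μ) ^ p
      ≤ ((∫ z, F z ∂μ) ^ (1 / q) * (∫ z, F z * G z ^ p ∂μ) ^ (1 / p)) ^ p :=
        Real.rpow_le_rpow (integral_nonneg fun z => (hfg z).symm ▸ mul_nonneg (hf0 z) (hg0 z))
          holder (by linarith)
    _ = (∫ z, F z ∂μ) ^ (p - 1) * ∫ z, F z * G z ^ p ∂μ := by
        rw [Real.mul_rpow (Real.rpow_nonneg hI0 _) (Real.rpow_nonneg hJ0 _),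
          ← Real.rpow_mul hI0, ← Real.rpow_mul hJ0, one_div_mul_cancel hqp.symm.ne_zero,
          Real.rpow_one, one_div_mul_eq_div, hqp.symm.div_conj_eq_sub_one]

theorem norm_integral_mul_rpow_le {𝕜 : Type*} [RCLike 𝕜] {k f : α → 𝕜} {p : ℝ} (hp : 1 ≤ p)
    (hk : Integrable k μ) (hf : AEStronglyMeasurable f μ)
    (hkf : Integrable (fun z => ‖k z‖ * ‖f z‖ ^ p) μ) :
    ‖∫ z, k z * f z ∂μ‖ ^ p ≤ (∫ z, ‖k z‖ ∂μ) ^ (p - 1) * ∫ z, ‖k z‖ * ‖f z‖ ^ p ∂μ := by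
  have h_norm : ‖∫ z, k z * f z ∂μ‖ ≤ ∫ z, ‖k z‖ * ‖f z‖ ∂μ := by
    simpa only [norm_mul] using norm_integral_le_integral_norm (fun z => k z * f z)
  exact (Real.rpow_le_rpow (norm_nonneg _) h_norm (by linarith)).trans
    (integral_mul_rpow_le hp (fun _ => norm_nonneg _) (fun _ => norm_nonneg _) hk.norm hf.norm hkf)

theorem sum_mul_integral_mul_le {ι : Type*} (s : Finset ι) {w : ι → ℝ} {g : ι → α → ℝ}
    {h : α → ℝ} {B : ℝ} (hgh : ∀ i ∈ s, Integrable (fun z => g i z * h z) μ)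
    (hh : Integrable h μ) (h0 : 0 ≤ h) (hB : ∀ z, ∑ i ∈ s, w i * g i z ≤ B) :
    ∑ i ∈ s, w i * ∫ z, g i z * h z ∂μ ≤ B * ∫ z, h z ∂μ := by
  have hterm (i : ι) (hi : i ∈ s) : Integrable (fun z => w i * (g i z * h z)) μ :=
    (hgh i hi).const_mul (w i)
  have hsum : Integrable (fun z => ∑ i ∈ s, w i * (g i z * h z)) μ :=
    integrable_finsetSum s hterm
  calc ∑ i ∈ s, w i * ∫ z, g i z * h z ∂μ
      = ∫ z, (∑ i ∈ s, w i * g i z) * h z ∂μ := by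
        simp_rw [← integral_const_mul, ← integral_finsetSum s hterm, Finset.sum_mul, mul_assoc]
    _ ≤ ∫ z, B * h z ∂μ := by
        refine integral_mono (by simpa only [Finset.sum_mul, mul_assoc] using hsum)
          (hh.const_mul B) fun z => mul_le_mul_of_nonneg_right (hB z) (h0 z)
    _ = B * ∫ z, h z ∂μ := integral_const_mul B h

theorem sum_mul_norm_rpow_le_of_reproducing_kernel [IsFiniteMeasure μ] {𝕜 ι : Type*} [RCLike 𝕜]
    [Fintype ι] {K : α → α → 𝕜} {f : α → 𝕜} {x : ι → α} {w : ι → ℝ} {c₂ B C p : ℝ}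
    (hp : 1 ≤ p) (hK : ∀ y, Integrable (K y) μ) (hf : AEStronglyMeasurable f μ)
    (hfC : ∀ z, ‖f z‖ ≤ C) (hrep : ∀ i, ∫ z, K (x i) z * f z ∂μ = f (x i))
    (hL1 : ∀ y, ∫ z, ‖K y z‖ ∂μ ≤ c₂) (hw : ∀ i, 0 ≤ w i)
    (hB : ∀ z, ∑ i, w i * ‖K (x i) z‖ ≤ B) :
    ∑ i, w i * ‖f (x i)‖ ^ p ≤ c₂ ^ (p - 1) * B * ∫ z, ‖f z‖ ^ p ∂μ := by
  -- `0 ≤ c₂` needs a point of `α`; on an empty space both sides vanish.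
  rcases isEmpty_or_nonempty α with hα | ⟨⟨y₀⟩⟩
  · have := x.isEmpty
    simp [integral_of_isEmpty]
  have hc₂ : 0 ≤ c₂ := (integral_nonneg fun _ => norm_nonneg _).trans (hL1 y₀)
  have hfp_meas : AEStronglyMeasurable (fun z => ‖f z‖ ^ p) μ :=
    (hf.norm.aemeasurable.pow_const p).aestronglyMeasurable
  have hfp_bdd : ∀ᵐ z ∂μ, ‖‖f z‖ ^ p‖ ≤ C ^ p := .of_forall fun z => by
    rw [Real.norm_of_nonneg (by positivity)]
    exact Real.rpow_le_rpow (norm_nonneg _) (hfC z) (by linarith)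
  have hfp : Integrable (fun z => ‖f z‖ ^ p) μ := .of_bound hfp_meas _ hfp_bdd
  have hKfp (y : α) : Integrable (fun z => ‖K y z‖ * ‖f z‖ ^ p) μ :=
    (hK y).norm.mul_bdd hfp_meas hfp_bdd
  have pointwise (i : ι) :
      ‖f (x i)‖ ^ p ≤ c₂ ^ (p - 1) * ∫ z, ‖K (x i) z‖ * ‖f z‖ ^ p ∂μ := by
    rw [← hrep i]
    refine (norm_integral_mul_rpow_le hp (hK _) hf (hKfp _)).trans
      (mul_le_mul_of_nonneg_right ?_ (integral_nonneg fun z => by positivity))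
    exact Real.rpow_le_rpow (integral_nonneg fun _ => norm_nonneg _) (hL1 _) (by linarith)
  calc ∑ i, w i * ‖f (x i)‖ ^ p
      ≤ ∑ i, w i * (c₂ ^ (p - 1) * ∫ z, ‖K (x i) z‖ * ‖f z‖ ^ p ∂μ) :=
        Finset.sum_le_sum fun i _ => mul_le_mul_of_nonneg_left (pointwise i) (hw i)
    _ = c₂ ^ (p - 1) * ∑ i, w i * ∫ z, ‖K (x i) z‖ * ‖f z‖ ^ p ∂μ := by
        rw [Finset.mul_sum]
        exact Finset.sum_congr rfl fun i _ => by ring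
    _ ≤ c₂ ^ (p - 1) * (B * ∫ z, ‖f z‖ ^ p ∂μ) :=
        mul_le_mul_of_nonneg_left (sum_mul_integral_mul_le _ (fun y _ => hKfp (x y)) hfp
          (fun z => by positivity) hB) (Real.rpow_nonneg hc₂ _)
    _ = c₂ ^ (p - 1) * B * ∫ z, ‖f z‖ ^ p ∂μ := (mul_assoc _ _ _).symm

end

theorem marcinkiewicz_zygmund_inequality_general
    {M : Type*} [MeasurableSpace M] (μ : Measure M) [IsFiniteMeasure μ]
    (φ : ℕ → M → ℂ) (lam : ℕ → ℝ)
    (hφmeas : ∀ ℓ, Measurable (φ ℓ))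
    (hφbdd : ∀ ℓ, ∃ C : ℝ, ∀ z, ‖φ ℓ z‖ ≤ C)
    (n ell : ℝ) (d : ℕ)
    (K : M → M → ℂ) (hKmeas : Measurable (Function.uncurry K))
    (hKbdd : ∃ CK : ℝ, ∀ x z, ‖K x z‖ ≤ CK)
    (c₂ c₃ : ℝ)
    -- (i) `K` reproduces every polynomial of degree at most `ell`
    (hrepro : ∀ (T : Finset ℕ) (c : ℕ → ℂ), (∀ ℓ ∈ T, lam ℓ ≤ ell) → ∀ x : M,
        ∫ z, K x z * (∑ ℓ ∈ T, c ℓ * φ ℓ z) ∂μ = ∑ ℓ ∈ T, c ℓ * φ ℓ x)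
    -- (ii) `L¹` bound for the kernel
    (hL1 : ∀ x : M, ∫ z, ‖K x z‖ ∂μ ≤ c₂)
    -- quadrature points and nonnegative weights
    (N : ℕ) (w : Fin N → ℝ) (pts : Fin N → M) (hw : ∀ i, 0 ≤ w i)
    -- (iii) discretized kernel bound
    (hdisc : ∀ z : M, ∑ i, w i * ‖K (pts i) z‖ ≤ c₃ * (ell / n) ^ d)
    (p₁ : ℝ) (hp₁ : 1 ≤ p₁)
    (T : Finset ℕ) (c : ℕ → ℂ) (hT : ∀ ℓ ∈ T, lam ℓ ≤ ell) :
    ∑ i, w i * ‖∑ ℓ ∈ T, c ℓ * φ ℓ (pts i)‖ ^ p₁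
      ≤ c₂ ^ (p₁ - 1) * c₃ * (ell / n) ^ d *
          ∫ z, ‖∑ ℓ ∈ T, c ℓ * φ ℓ z‖ ^ p₁ ∂μ := by
  choose C hC using hφbdd
  obtain ⟨CK, hCK⟩ := hKbdd
  rw [mul_assoc (c₂ ^ (p₁ - 1)) c₃]
  refine sum_mul_norm_rpow_le_of_reproducing_kernel hp₁ (fun y => ?_) (by fun_prop)
    (C := ∑ ℓ ∈ T, ‖c ℓ‖ * C ℓ) (fun z => ?_) (fun i => hrepro T c hT (pts i)) hL1 hw hdisc
  · exact .of_bound (hKmeas.comp measurable_prodMk_left).aestronglyMeasurable CK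
      (.of_forall (hCK y))
  · refine (norm_sum_le _ _).trans (Finset.sum_le_sum fun ℓ _ => ?_)
    rw [norm_mul]
    exact mul_le_mul_of_nonneg_left (hC ℓ z) (norm_nonneg _)

/-- Marcinkiewicz–Zygmund inequality: if the bounded kernel `K`
reproduces `Π_ℓ`, has `L¹` bound `c₂`, and the discretized kernel bound
`Σ_i w_i |K(x_i,z)| ≤ c₃ (ℓ/n)^d` holds, then for `1 ≤ p₁ < ∞` and `P ∈ Π_ℓ`,
`Σ_i w_i |P(x_i)|^{p₁} ≤ c₂^{p₁−1} c₃ (ℓ/n)^d ∫ |P|^{p₁} dμ`. -/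
theorem marcinkiewicz_zygmund_inequality
    {M : Type*} [MeasurableSpace M] (μ : Measure M) [IsFiniteMeasure μ]
    (φ : ℕ → M → ℂ) (lam : ℕ → ℝ)
    (hφmeas : ∀ ℓ, Measurable (φ ℓ))
    (hφbdd : ∀ ℓ, ∃ C : ℝ, ∀ z, ‖φ ℓ z‖ ≤ C)
    (hortho : ∀ ℓ ℓ', ∫ z, φ ℓ z * (starRingEnd ℂ) (φ ℓ' z) ∂μ
        = if ℓ = ℓ' then 1 else 0)
    (hlam : ∀ ℓ, 0 ≤ lam ℓ)
    (hlamtop : Filter.Tendsto lam Filter.atTop Filter.atTop)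
    (n ell : ℝ) (hn : 1 ≤ n) (hell : n ≤ ell) (d : ℕ) (hd : 1 ≤ d)
    (K : M → M → ℂ) (hKmeas : Measurable (Function.uncurry K))
    (hKbdd : ∃ CK : ℝ, ∀ x z, ‖K x z‖ ≤ CK)
    (c₂ c₃ : ℝ)
    -- (i) `K` reproduces every polynomial of degree at most `ell`
    (hrepro : ∀ (T : Finset ℕ) (c : ℕ → ℂ), (∀ ℓ ∈ T, lam ℓ ≤ ell) → ∀ x : M,
        ∫ z, K x z * (∑ ℓ ∈ T, c ℓ * φ ℓ z) ∂μ = ∑ ℓ ∈ T, c ℓ * φ ℓ x)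
    -- (ii) `L¹` bound for the kernel
    (hL1 : ∀ x : M, ∫ z, ‖K x z‖ ∂μ ≤ c₂)
    -- quadrature points and nonnegative weights
    (N : ℕ) (w : Fin N → ℝ) (pts : Fin N → M) (hw : ∀ i, 0 ≤ w i)
    -- (iii) discretized kernel bound
    (hdisc : ∀ z : M, ∑ i, w i * ‖K (pts i) z‖ ≤ c₃ * (ell / n) ^ d)
    (p₁ : ℝ) (hp₁ : 1 ≤ p₁)
    (T : Finset ℕ) (c : ℕ → ℂ) (hT : ∀ ℓ ∈ T, lam ℓ ≤ ell) :
    ∑ i, w i * ‖∑ ℓ ∈ T, c ℓ * φ ℓ (pts i)‖ ^ p₁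
      ≤ c₂ ^ (p₁ - 1) * c₃ * (ell / n) ^ d *
          ∫ z, ‖∑ ℓ ∈ T, c ℓ * φ ℓ z‖ ^ p₁ ∂μ :=
  marcinkiewicz_zygmund_inequality_general μ φ lam hφmeas hφbdd n ell d K hKmeas hKbdd c₂ c₃ hrepro
    hL1 N w pts hw hdisc p₁ hp₁ T c hT
end

section
/- Let (M, μ) be a measure space, d ≥ 1, r > 0, 0 < a ≤ b, and N ≥ 1. Let n satisfy a N^{1/(2r+d)} ≤ n ≤ b N^{1/(2r+d)}. Let x₁,…,x_N ∈ M, let w₁,…,w_N be weights with 0 < w_i ≤ c₂/N, and let K₁,…,K_N ∈ L²(μ) satisfy ‖K_i‖²_{L²(μ)} ≤ c₁ n^d. Let f : M → ℂ be measurable and square-integrable, let ε₁,…,ε_N be independent real random variables with E[ε_i] = 0 and |ε_i| ≤ M almost surely, and set V := Σ_i w_i (f(x_i) + ε_i) K_i and V* := Σ_i w_i f(x_i) K_i. If the clean estimator satisfies ‖V* − f‖_{L²(μ)} ≤ c₅ n^{−r} B for some B ≥ 0, then E[‖V − f‖²_{L²(μ)}] ≤ (c₅² B² a^{−2r} + c₁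 c₂² M² b^d) · N^{−2r/(2r+d)}. -/
open MeasureTheory ProbabilityTheory

/-!
Bias–variance decomposition. The error splits as `V − f = (V* − f) + ∑ εᵢ • wᵢ Kᵢ` in
`L²(μ)`. Independent centred noise is uncorrelated, so all cross terms vanish in expectation and
`E‖V − f‖² = ‖V* − f‖² + ∑ E[εᵢ²] wᵢ² ‖Kᵢ‖² ≤ (c₅ n^{-r} B)² + N (c₂/N)² Mb² c₁ nᵈ`.
For `n ≍ N^{1/(2r+d)}` both `n^{-2r}` and `nᵈ/N` are of order `N^{-2r/(2r+d)}`.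
-/

section UncorrelatedNoise

open Finset InnerProductSpace

variable {E : Type*} [NormedAddCommGroup E] [InnerProductSpace ℝ E]
  {Ω : Type*} [MeasurableSpace Ω] {P : Measure Ω}
  {ι : Type*} [Fintype ι] {ξ : ι → Ω → ℝ}

theorem integral_inner_sum_smul_eq_zero (g : E) (k : ι → E)
    (hξ : ∀ i, Integrable (ξ i) P) (hmean : ∀ i, ∫ ω, ξ i ω ∂P = 0) :
    ∫ ω, ⟪g, ∑ i, ξ i ω • k i⟫_ℝ ∂P = 0 := by
  simp only [inner_sum, real_inner_smul_right]
  rw [integral_finsetSum _ fun i _ => (hξ i).mul_const _]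
  exact sum_eq_zero fun i _ => by rw [integral_mul_const, hmean, zero_mul]

theorem integral_norm_sum_smul_sq_of_uncorrelated (k : ι → E) (hξ : ∀ i, MemLp (ξ i) 2 P)
    (huncorr : Pairwise fun i j => ∫ ω, ξ i ω * ξ j ω ∂P = 0) :
    ∫ ω, ‖∑ i, ξ i ω • k i‖ ^ 2 ∂P = ∑ i, (∫ ω, ξ i ω ^ 2 ∂P) * ‖k i‖ ^ 2 := by
  have hint : ∀ i j, Integrable (fun ω => ξ i ω * ξ j ω * ⟪k j, k i⟫_ℝ) P :=
    fun i j => ((hξ i).integrable_mul (hξ j)).mul_const _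
  simp only [← real_inner_self_eq_norm_sq, sum_inner, inner_sum, real_inner_smul_left,
    real_inner_smul_right, ← mul_assoc]
  rw [integral_finsetSum _ fun i _ => integrable_finsetSum _ fun j _ => hint i j]
  refine sum_congr rfl fun i _ => ?_
  rw [integral_finsetSum _ fun j _ => hint i j, sum_eq_single i]
  · simp only [integral_mul_const, sq]
  · intro j _ hji
    rw [integral_mul_const, huncorr hji.symm, zero_mul]
  · simp

theorem integral_norm_add_sum_smul_sq_of_uncorrelated [IsProbabilityMeasure P] (g : E)
    (k : ι → E) (hξ : ∀ i, MemLp (ξ i) 2 P) (hmean : ∀ i, ∫ ω, ξ i ω ∂P = 0)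
    (huncorr : Pairwise fun i j => ∫ ω, ξ i ω * ξ j ω ∂P = 0) :
    ∫ ω, ‖g + ∑ i, ξ i ω • k i‖ ^ 2 ∂P
      = ‖g‖ ^ 2 + ∑ i, (∫ ω, ξ i ω ^ 2 ∂P) * ‖k i‖ ^ 2 := by
  have hint : ∀ i, Integrable (ξ i) P := fun i => (hξ i).integrable one_le_two
  have hcross : Integrable (fun ω => ⟪g, ∑ i, ξ i ω • k i⟫_ℝ) P := by
    simp only [inner_sum, real_inner_smul_right]
    exact integrable_finsetSum _ fun i _ => (hint i).mul_const _
  have hsq : Integrable (fun ω => ‖∑ i, ξ i ω • k i‖ ^ 2) P := by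
    have hsum : MemLp (fun ω => ∑ i, ξ i ω • k i) 2 P :=
      memLp_finsetSum _ fun i _ => (memLp_top_const (k i)).smul (hξ i)
    exact (memLp_two_iff_integrable_sq_norm hsum.1).1 hsum
  simp only [norm_add_sq_real]
  rw [integral_add (f := fun ω => ‖g‖ ^ 2 + 2 * ⟪g, ∑ i, ξ i ω • k i⟫_ℝ)
      ((integrable_const _).add (hcross.const_mul 2)) hsq,
    integral_add (integrable_const _) (hcross.const_mul 2), integral_const_mul,
    integral_inner_sum_smul_eq_zero g k hint hmean,
    integral_norm_sum_smul_sq_of_uncorrelated k hξ huncorr]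
  simp

end UncorrelatedNoise

theorem ProbabilityTheory.iIndepFun.pairwise_integral_mul_eq_zero {Ω ι : Type*}
    [MeasurableSpace Ω] {P : Measure Ω} {X : ι → Ω → ℝ}
    (h : iIndepFun X P) (hX : ∀ i, AEStronglyMeasurable (X i) P)
    (hmean : ∀ i, ∫ ω, X i ω ∂P = 0) : Pairwise fun i j => ∫ ω, X i ω * X j ω ∂P = 0 :=
  fun i j hij => by
    dsimp only
    rw [(h.indepFun hij).integral_fun_mul_eq_mul_integral (hX i) (hX j), hmean i, zero_mul]

theorem integral_sq_le_sq_of_abs_le {Ω : Type*} [MeasurableSpace Ω] {P : Measure Ω}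
    [IsProbabilityMeasure P] {X : Ω → ℝ} {C : ℝ} (h : ∀ᵐ ω ∂P, |X ω| ≤ C) :
    ∫ ω, X ω ^ 2 ∂P ≤ C ^ 2 := by
  calc ∫ ω, X ω ^ 2 ∂P ≤ ∫ _, C ^ 2 ∂P :=
        integral_mono_of_nonneg (ae_of_all _ fun ω => sq_nonneg _) (integrable_const _)
          (h.mono fun ω hω => by simpa only [sq_abs] using pow_le_pow_left₀ (abs_nonneg _) hω 2)
    _ = C ^ 2 := by simp

namespace MeasureTheory.L2

variable {α E ι : Type*} [MeasurableSpace α] {μ : Measure α} [NormedAddCommGroup E]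
  [InnerProductSpace ℝ E]

theorem norm_sq_eq_integral_norm_sq (F : Lp E 2 μ) : ‖F‖ ^ 2 = ∫ z, ‖F z‖ ^ 2 ∂μ := by
  simp only [← real_inner_self_eq_norm_sq, inner_def]

theorem norm_toLp_sq {g : α → E} (hg : MemLp g 2 μ) :
    ‖hg.toLp g‖ ^ 2 = ∫ z, ‖g z‖ ^ 2 ∂μ := by
  rw [norm_sq_eq_integral_norm_sq]
  exact integral_congr_ae (hg.coeFn_toLp.mono fun z hz => by simp only [hz])

theorem integral_norm_add_sum_smul_sq [Fintype ι] {g : α → E} {K : ι → α → E}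
    {G : Lp E 2 μ} {k : ι → Lp E 2 μ} (hg : g =ᵐ[μ] G) (hK : ∀ i, K i =ᵐ[μ] k i) (c : ι → ℝ) :
    ∫ z, ‖g z + ∑ i, c i • K i z‖ ^ 2 ∂μ = ‖G + ∑ i, c i • k i‖ ^ 2 := by
  rw [norm_sq_eq_integral_norm_sq]
  refine integral_congr_ae ?_
  filter_upwards [hg, ae_all_iff.2 hK, Lp.coeFn_add G (∑ i, c i • k i),
    Lp.coeFn_finsetSum Finset.univ (fun i => c i • k i),
    ae_all_iff.2 fun i => Lp.coeFn_smul (c i) (k i)] with z hgz hKz hadd hsum hsmul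
  simp only [hadd, hsum, hgz, hKz, hsmul, Pi.add_apply, Finset.sum_apply, Pi.smul_apply]

end MeasureTheory.L2

theorem integral_norm_weighted_sum_sub_sq {α ι : Type*} [MeasurableSpace α] {μ : Measure α}
    [Fintype ι] (w e : ι → ℝ) (y : ι → ℂ) {K : ι → α → ℂ} (hK : ∀ i, MemLp (K i) 2 μ)
    {f : α → ℂ} (hclean : MemLp (fun z => (∑ i, (w i : ℂ) * y i * K i z) - f z) 2 μ) :
    ∫ z, ‖(∑ i, (w i : ℂ) * (y i + e i) * K i z) - f z‖ ^ 2 ∂μ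
      = ‖hclean.toLp _ + ∑ i, e i • w i • (hK i).toLp (K i)‖ ^ 2 := by
  have hsplit : ∀ z, (∑ i, (w i : ℂ) * (y i + e i) * K i z) - f z
      = ((∑ i, (w i : ℂ) * y i * K i z) - f z) + ∑ i, e i • (w i • K i) z := by
    intro z
    simp only [Pi.smul_apply, Complex.real_smul, mul_add, add_mul, Finset.sum_add_distrib]
    rw [add_sub_right_comm]
    exact congrArg _ (Finset.sum_congr rfl fun i _ => by ring)
  simp_rw [hsplit]
  exact L2.integral_norm_add_sum_smul_sq hclean.coeFn_toLp.symm
    (fun i => ((Lp.coeFn_smul (w i) _).trans ((hK i).coeFn_toLp.const_smul (w i))).symm) e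

theorem Real.rpow_neg_le_of_mul_rpow_le {N a n ρ s : ℝ} (hN : 0 < N) (ha : 0 < a)
    (hρ : 0 ≤ ρ) (h : a * N ^ (1 / s) ≤ n) : n ^ (-ρ) ≤ a ^ (-ρ) * N ^ (-ρ / s) := by
  have hpos : 0 < a * N ^ (1 / s) := mul_pos ha (Real.rpow_pos_of_pos hN _)
  calc n ^ (-ρ) ≤ (a * N ^ (1 / s)) ^ (-ρ) :=
        Real.rpow_le_rpow_of_nonpos hpos h (neg_nonpos.2 hρ)
    _ = a ^ (-ρ) * N ^ (-ρ / s) := by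
        rw [Real.mul_rpow ha.le (Real.rpow_nonneg hN.le _), ← Real.rpow_mul hN.le,
          one_div_mul_eq_div]

theorem Real.sq_mul_rpow_neg_mul_le {N a n c B r s : ℝ} (hN : 0 < N) (ha : 0 < a)
    (hr : 0 ≤ r) (h : a * N ^ (1 / s) ≤ n) :
    (c * n ^ (-r) * B) ^ 2 ≤ c ^ 2 * B ^ 2 * a ^ (-(2 * r)) * N ^ (-(2 * r) / s) := by
  have hn : 0 < n := (mul_pos ha (Real.rpow_pos_of_pos hN _)).trans_le h
  calc (c * n ^ (-r) * B) ^ 2 = c ^ 2 * B ^ 2 * n ^ (-(2 * r)) := by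
        rw [show -(2 * r) = -r * (2 : ℕ) by push_cast; ring, Real.rpow_mul_natCast hn.le]
        ring
    _ ≤ c ^ 2 * B ^ 2 * (a ^ (-(2 * r)) * N ^ (-(2 * r) / s)) := by
        gcongr
        exact Real.rpow_neg_le_of_mul_rpow_le hN ha (by positivity) h
    _ = c ^ 2 * B ^ 2 * a ^ (-(2 * r)) * N ^ (-(2 * r) / s) := by ring

theorem Real.pow_div_le_of_le_mul_rpow {N b n ρ : ℝ} {d : ℕ} (hN : 0 < N) (hn : 0 ≤ n)
    (hs : ρ + d ≠ 0) (h : n ≤ b * N ^ (1 / (ρ + d))) :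
    n ^ d / N ≤ b ^ d * N ^ (-ρ / (ρ + d)) := by
  have hexp : (N ^ (1 / (ρ + d))) ^ d / N = N ^ (-ρ / (ρ + d)) := by
    rw [← Real.rpow_natCast, ← Real.rpow_mul hN.le, ← Real.rpow_sub_one hN.ne']
    congr 1
    field_simp
    ring
  calc n ^ d / N ≤ (b * N ^ (1 / (ρ + d))) ^ d / N := by gcongr
    _ = b ^ d * N ^ (-ρ / (ρ + d)) := by rw [mul_pow, mul_div_assoc, hexp]

theorem noisy_deterministic_rate_general
    {M : Type*} [MeasurableSpace M] (μ : Measure M)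
    {Ω : Type*} [MeasurableSpace Ω] (P : Measure Ω) [IsProbabilityMeasure P]
    (d : ℕ) (r : ℝ) (hr : 0 < r)
    (a b : ℝ) (ha : 0 < a)
    (N : ℕ) (hN : 1 ≤ N)
    (n : ℝ)
    (hnlow : a * (N : ℝ) ^ ((1 : ℝ) / (2 * r + d)) ≤ n)
    (hnhigh : n ≤ b * (N : ℝ) ^ ((1 : ℝ) / (2 * r + d)))
    (x : Fin N → M) (w : Fin N → ℝ) (c₁ c₂ c₅ Mb B : ℝ)
    (hw : ∀ i, 0 < w i) (hwle : ∀ i, w i ≤ c₂ / N)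
    (K : Fin N → M → ℂ)
    (hK : ∀ i, MemLp (K i) 2 μ)
    (hKnorm : ∀ i, ∫ z, ‖K i z‖ ^ 2 ∂μ ≤ c₁ * n ^ d)
    (f : M → ℂ) (hf : MemLp f 2 μ)
    (eps : Fin N → Ω → ℝ)
    (hepsindep : iIndepFun eps P)
    (hepsint : ∀ i, Integrable (eps i) P)
    (hepsmean : ∀ i, ∫ ω, eps i ω ∂P = 0)
    (hepsbdd : ∀ i, ∀ᵐ ω ∂P, |eps i ω| ≤ Mb)
    -- clean-data error bound (supplied by Theorem 4 with `B = ‖f‖_{W₂^r}`)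
    (hclean : Real.sqrt (∫ z, ‖
          ((∑ i, (w i : ℂ) * f (x i) * K i z) - f z)‖ ^ 2 ∂μ) ≤ c₅ * n ^ (-r) * B) :
    ∫ ω, (∫ z, ‖
          ((∑ i, (w i : ℂ) * (f (x i) + (eps i ω : ℂ)) * K i z) - f z)‖ ^ 2 ∂μ) ∂P
      ≤ (c₅ ^ 2 * B ^ 2 * a ^ (-(2 * r)) + c₁ * c₂ ^ 2 * Mb ^ 2 * b ^ d) *
          (N : ℝ) ^ (-(2 * r) / (2 * r + d)) := by
  have hNpos : (0 : ℝ) < N := by exact_mod_cast hN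
  have hnpos : 0 < n := (mul_pos ha (Real.rpow_pos_of_pos hNpos _)).trans_le hnlow
  have hg : MemLp (fun z => (∑ i, (w i : ℂ) * f (x i) * K i z) - f z) 2 μ :=
    (memLp_finsetSum Finset.univ fun i _ => (hK i).const_mul ((w i : ℂ) * f (x i))).sub hf
  have hε : ∀ i, MemLp (eps i) 2 P := fun i =>
    MemLp.of_bound (hepsint i).1 Mb (by simpa only [Real.norm_eq_abs] using hepsbdd i)
  have hbias : ‖hg.toLp _‖ ^ 2
      ≤ c₅ ^ 2 * B ^ 2 * a ^ (-(2 * r)) * (N : ℝ) ^ (-(2 * r) / (2 * r + d)) := by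
    rw [L2.norm_toLp_sq]
    exact (Real.sqrt_le_iff.1 hclean).2.trans (Real.sq_mul_rpow_neg_mul_le hNpos ha hr.le hnlow)
  have hvar : ∑ i, (∫ ω, eps i ω ^ 2 ∂P) * ‖w i • (hK i).toLp (K i)‖ ^ 2
      ≤ c₁ * c₂ ^ 2 * Mb ^ 2 * b ^ d * (N : ℝ) ^ (-(2 * r) / (2 * r + d)) := by
    have hc₁ : 0 ≤ c₁ := nonneg_of_mul_nonneg_left
      ((integral_nonneg fun z => by positivity).trans (hKnorm ⟨0, hN⟩)) (pow_pos hnpos d)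
    calc _ ≤ ∑ _i : Fin N, Mb ^ 2 * ((c₂ / N) ^ 2 * (c₁ * n ^ d)) := by
          refine Finset.sum_le_sum fun i _ => ?_
          rw [norm_smul, mul_pow, L2.norm_toLp_sq, Real.norm_eq_abs, sq_abs]
          gcongr
          exacts [integral_sq_le_sq_of_abs_le (hepsbdd i), (hw i).le, hwle i, hKnorm i]
      _ = c₁ * c₂ ^ 2 * Mb ^ 2 * (n ^ d / N) := by
          rw [Finset.sum_const, Finset.card_univ, Fintype.card_fin, nsmul_eq_mul]
          field_simp
      _ ≤ c₁ * c₂ ^ 2 * Mb ^ 2 * (b ^ d * (N : ℝ) ^ (-(2 * r) / (2 * r + d))) := by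
          gcongr
          exact Real.pow_div_le_of_le_mul_rpow hNpos hnpos.le (by positivity) hnhigh
      _ = _ := by ring
  calc _ = ∫ ω, ‖hg.toLp _ + ∑ i, eps i ω • w i • (hK i).toLp (K i)‖ ^ 2 ∂P := by
        simp_rw [integral_norm_weighted_sum_sub_sq w _ (fun i => f (x i)) hK hg]
    _ = ‖hg.toLp _‖ ^ 2 + ∑ i, (∫ ω, eps i ω ^ 2 ∂P) * ‖w i • (hK i).toLp (K i)‖ ^ 2 :=
        integral_norm_add_sum_smul_sq_of_uncorrelated _ _ hε hepsmean
          (hepsindep.pairwise_integral_mul_eq_zero (fun i => (hepsint i).1) hepsmean)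
    _ ≤ _ := (add_le_add hbias hvar).trans_eq (by ring)

/-- non-distributed filtered hyperinterpolation for noisy data with
deterministic samples achieves the rate `N^{−2r/(2r+d)}`: with
`a N^{1/(2r+d)} ≤ n ≤ b N^{1/(2r+d)}` and the clean-data error bound
`‖V* − f‖_{L²} ≤ c₅ n^{−r} B`,
`E[‖V − f‖²] ≤ (c₅² B² a^{−2r} + c₁ c₂² Mb² b^d) N^{−2r/(2r+d)}`. -/
theorem noisy_deterministic_rate
    {M : Type*} [MeasurableSpace M] (μ : Measure M)
    {Ω : Type*} [MeasurableSpace Ω] (P : Measure Ω) [IsProbabilityMeasure P]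
    (d : ℕ) (hd : 1 ≤ d) (r : ℝ) (hr : 0 < r)
    (a b : ℝ) (ha : 0 < a) (hab : a ≤ b)
    (N : ℕ) (hN : 1 ≤ N)
    (n : ℝ)
    (hnlow : a * (N : ℝ) ^ ((1 : ℝ) / (2 * r + d)) ≤ n)
    (hnhigh : n ≤ b * (N : ℝ) ^ ((1 : ℝ) / (2 * r + d)))
    (x : Fin N → M) (w : Fin N → ℝ) (c₁ c₂ c₅ Mb B : ℝ) (hB : 0 ≤ B)
    (hw : ∀ i, 0 < w i) (hwle : ∀ i, w i ≤ c₂ / N)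
    (K : Fin N → M → ℂ)
    (hK : ∀ i, MemLp (K i) 2 μ)
    (hKnorm : ∀ i, ∫ z, ‖K i z‖ ^ 2 ∂μ ≤ c₁ * n ^ d)
    (f : M → ℂ) (hf : MemLp f 2 μ)
    (eps : Fin N → Ω → ℝ)
    (hepsmeas : ∀ i, Measurable (eps i))
    (hepsindep : iIndepFun eps P)
    (hepsint : ∀ i, Integrable (eps i) P)
    (hepsmean : ∀ i, ∫ ω, eps i ω ∂P = 0)
    (hepsbdd : ∀ i, ∀ᵐ ω ∂P, |eps i ω| ≤ Mb)
    -- clean-data error bound (supplied by Theorem 4 with `B = ‖f‖_{W₂^r}`)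
    (hclean : Real.sqrt (∫ z, ‖
          ((∑ i, (w i : ℂ) * f (x i) * K i z) - f z)‖ ^ 2 ∂μ) ≤ c₅ * n ^ (-r) * B) :
    ∫ ω, (∫ z, ‖
          ((∑ i, (w i : ℂ) * (f (x i) + (eps i ω : ℂ)) * K i z) - f z)‖ ^ 2 ∂μ) ∂P
      ≤ (c₅ ^ 2 * B ^ 2 * a ^ (-(2 * r)) + c₁ * c₂ ^ 2 * Mb ^ 2 * b ^ d) *
          (N : ℝ) ^ (-(2 * r) / (2 * r + d)) :=
  noisy_deterministic_rate_general μ P d r hr a b ha N hN n hnlow hnhigh x w c₁ c₂ c₅ Mb B hw hwle K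
    hK hKnorm f hf eps hepsindep hepsint hepsmean hepsbdd hclean
end

section
/- Let H be a real Hilbert space, f ∈ H, d ≥ 1, r > 0, 0 < a ≤ b, A ≥ 0, B ≥ 0, and m ≥ 1. Let N₁,…,N_m ≥ 1 with N := Σ_j N_j, and let n satisfy a N^{1/(2r+d)} ≤ n ≤ b N^{1/(2r+d)}. Let g₁,…,g_m be independent Bochner-measurable H-valued random elements with E[‖g_j‖²] < ∞ such that for every j: E[‖g_j − f‖²] ≤ A n^{−2r} + B n^d / N_j and ‖E[g_j] − f‖² ≤ A n^{−2r}. Then E[‖Σ_{j=1}^m (N_j/N) g_j − f‖²] ≤ (2 A a^{−2r} + B b^d) · N^{−2r/(2r+d)}. -/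
/-!
Centre the server estimators at `f` and expand the square of their weighted average
`∑ⱼ wⱼ (gⱼ - f)`. Independence turns each cross term into the inner product of two biases, so it
is at most the squared-bias bound `A n^{-2r}`; the diagonal terms carry the mean squared errors.
With `wⱼ = Nⱼ / N` the variance contributions `wⱼ² · B nᵈ / Nⱼ` add up to `B nᵈ / N`, so the
averaged estimator has mean squared error at most `A n^{-2r} + B nᵈ / N`, and the choice
`n ≍ N^{1/(2r+d)}` makes both terms of order `N^{-2r/(2r+d)}`.
-/

open MeasureTheory ProbabilityTheory
open scoped RealInnerProductSpace

theorem quadratic_form_le_of_offDiag_le {ι : Type*} [Fintype ι] {w v : ι → ℝ}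
    {I : ι → ι → ℝ} {c : ℝ} (hw : ∀ i, 0 ≤ w i) (hw_sum : ∑ i, w i = 1)
    (hoff : Pairwise fun i j => I i j ≤ c) (hdiag : ∀ j, I j j ≤ c + v j) :
    ∑ i, ∑ j, w i * w j * I i j ≤ c + ∑ j, w j ^ 2 * v j := by
  classical
  have hI : ∀ i j, I i j ≤ c + if i = j then v j else 0 := by
    intro i j
    rcases eq_or_ne i j with rfl | hij
    · simpa using hdiag i
    · simpa [hij] using hoff hij
  calc ∑ i, ∑ j, w i * w j * I i j
      ≤ ∑ i, ∑ j, w i * w j * (c + if i = j then v j else 0) := by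
        gcongr with i _ j _
        · exact mul_nonneg (hw i) (hw j)
        · exact hI i j
    _ = c * (∑ i, w i) * (∑ j, w j) + ∑ j, w j ^ 2 * v j := by
        simp only [mul_add, Finset.sum_add_distrib, mul_ite, mul_zero, Finset.sum_ite_eq,
          Finset.mem_univ, if_true, Finset.mul_sum, Finset.sum_mul]
        congr 1
        · exact Finset.sum_congr rfl fun i _ => Finset.sum_congr rfl fun j _ => by ring
        · exact Finset.sum_congr rfl fun j _ => by ring
    _ = c + ∑ j, w j ^ 2 * v j := by rw [hw_sum, mul_one, mul_one]

theorem Finset.sum_div_sum_sq_mul_div {ι : Type*} [Fintype ι] (x : ι → ℝ) (K : ℝ) :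
    ∑ j, (x j / ∑ i, x i) ^ 2 * (K / x j) = K / ∑ i, x i := by
  set S := ∑ i, x i with hS
  have hterm : ∀ j, (x j / S) ^ 2 * (K / x j) = x j * (K / S ^ 2) := by
    intro j
    rcases eq_or_ne (x j) 0 with h | h
    · simp [h]
    · field_simp
  rw [Finset.sum_congr rfl fun j _ => hterm j, ← Finset.sum_mul, ← hS]
  rcases eq_or_ne S 0 with h | h
  · simp [h]
  · field_simp

namespace Real

theorem rpow_neg_le_of_mul_rpow_le_s13 {a N n p s : ℝ} (ha : 0 < a) (hN : 0 < N) (hp : 0 ≤ p)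
    (h : a * N ^ (1 / s) ≤ n) : n ^ (-p) ≤ a ^ (-p) * N ^ (-p / s) :=
  calc n ^ (-p) ≤ (a * N ^ (1 / s)) ^ (-p) :=
        rpow_le_rpow_of_nonpos (by positivity) h (neg_nonpos.mpr hp)
    _ = a ^ (-p) * N ^ (-p / s) := by
        rw [mul_rpow ha.le (by positivity), ← rpow_mul hN.le]
        congr 2
        ring

theorem pow_div_le_of_le_mul_rpow_s13 {b N n p : ℝ} {k : ℕ} (hN : 0 < N) (hn : 0 ≤ n)
    (hs : p + k ≠ 0) (h : n ≤ b * N ^ (1 / (p + k))) :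
    n ^ k / N ≤ b ^ k * N ^ (-p / (p + k)) :=
  calc n ^ k / N ≤ (b * N ^ (1 / (p + k))) ^ k / N := by gcongr
    _ = b ^ k * N ^ (-p / (p + k)) := by
        rw [mul_pow, ← rpow_natCast (N ^ _), ← rpow_mul hN.le, mul_div_assoc,
          ← rpow_sub_one hN.ne']
        congr 2
        field_simp
        ring

end Real

section HilbertValued

variable {Ω H : Type*} [MeasurableSpace Ω] {P : Measure Ω}
  [NormedAddCommGroup H] [InnerProductSpace ℝ H]

theorem MeasureTheory.MemLp.integrable_inner {X Y : Ω → H} (hX : MemLp X 2 P)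
    (hY : MemLp Y 2 P) : Integrable (fun ω => ⟪X ω, Y ω⟫) P :=
  memLp_one_iff_integrable.mp <| hX.of_bilin (fun x y => ⟪x, y⟫) 1 hY
    (hX.1.inner hY.1) (.of_forall fun ω => by simpa using nnnorm_inner_le_nnnorm (X ω) (Y ω))

theorem integral_norm_sum_smul_sq {ι : Type*} [Fintype ι] (w : ι → ℝ) {X : ι → Ω → H}
    (hX : ∀ j, MemLp (X j) 2 P) :
    ∫ ω, ‖∑ j, w j • X j ω‖ ^ 2 ∂P = ∑ i, ∑ j, w i * w j * ∫ ω, ⟪X i ω, X j ω⟫ ∂P := by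
  have hexpand : ∀ ω, ‖∑ j, w j • X j ω‖ ^ 2 = ∑ i, ∑ j, w i * w j * ⟪X i ω, X j ω⟫ := by
    intro ω
    rw [← real_inner_self_eq_norm_sq, sum_inner]
    simp only [inner_sum, real_inner_smul_left, real_inner_smul_right]
    exact Finset.sum_congr rfl fun i _ => Finset.sum_congr rfl fun j _ => by ring
  have hint : ∀ i j, Integrable (fun ω => w i * w j * ⟪X i ω, X j ω⟫) P :=
    fun i j => ((hX i).integrable_inner (hX j)).const_mul _
  simp_rw [hexpand]
  rw [integral_finsetSum _ fun i _ => integrable_finsetSum _ fun j _ => hint i j]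
  refine Finset.sum_congr rfl fun i _ => ?_
  rw [integral_finsetSum _ fun j _ => hint i j]
  exact Finset.sum_congr rfl fun j _ => integral_const_mul _ _

variable [CompleteSpace H] [MeasurableSpace H] [BorelSpace H]

theorem ProbabilityTheory.IndepFun.integral_inner {X Y : Ω → H} (hXY : IndepFun X Y P)
    (hX : Integrable X P) (hY : Integrable Y P) :
    ∫ ω, ⟪X ω, Y ω⟫ ∂P = ⟪∫ ω, X ω ∂P, ∫ ω, Y ω ∂P⟫ :=
  hXY.integral_bilin hX hY (innerSL ℝ)

theorem integral_norm_sum_smul_sub_sq_le [IsProbabilityMeasure P] {ι : Type*} [Fintype ι]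
    {g : ι → Ω → H} (f : H) {w v : ι → ℝ} {c : ℝ} (hw : ∀ j, 0 ≤ w j)
    (hw_sum : ∑ j, w j = 1) (hindep : Pairwise fun i j => IndepFun (g i) (g j) P)
    (hg : ∀ j, MemLp (g j) 2 P) (hmse : ∀ j, ∫ ω, ‖g j ω - f‖ ^ 2 ∂P ≤ c + v j)
    (hbias : ∀ j, ‖(∫ ω, g j ω ∂P) - f‖ ^ 2 ≤ c) :
    ∫ ω, ‖(∑ j, w j • g j ω) - f‖ ^ 2 ∂P ≤ c + ∑ j, w j ^ 2 * v j := by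
  set X : ι → Ω → H := fun j ω => g j ω - f
  have hXL2 : ∀ j, MemLp (X j) 2 P := fun j => (hg j).sub (memLp_const f)
  have hXmean : ∀ j, ∫ ω, X j ω ∂P = (∫ ω, g j ω ∂P) - f := fun j => by
    simp [X, integral_sub ((hg j).integrable one_le_two) (integrable_const f)]
  have hcentre : ∀ ω, (∑ j, w j • g j ω) - f = ∑ j, w j • X j ω := fun ω => by
    simp only [X, smul_sub, Finset.sum_sub_distrib, ← Finset.sum_smul, hw_sum, one_smul]
  simp_rw [hcentre]
  rw [integral_norm_sum_smul_sq w hXL2]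
  refine quadratic_form_le_of_offDiag_le hw hw_sum (fun i j hij => ?_) fun j => ?_
  · show ∫ ω, ⟪X i ω, X j ω⟫ ∂P ≤ c
    have hXij : IndepFun (X i) (X j) P :=
      (hindep hij).comp (measurable_sub_const f) (measurable_sub_const f)
    rw [hXij.integral_inner ((hXL2 i).integrable one_le_two) ((hXL2 j).integrable one_le_two)]
    have hbi := hXmean i ▸ hbias i
    have hbj := hXmean j ▸ hbias j
    nlinarith [real_inner_le_norm (∫ ω, X i ω ∂P) (∫ ω, X j ω ∂P),
      sq_nonneg (‖∫ ω, X i ω ∂P‖ - ‖∫ ω, X j ω ∂P‖)]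
  · simpa only [real_inner_self_eq_norm_sq] using hmse j

end HilbertValued

theorem distributed_noisy_deterministic_rate_general
    {H : Type*} [NormedAddCommGroup H] [InnerProductSpace ℝ H] [CompleteSpace H]
    [MeasurableSpace H] [BorelSpace H]
    {Ω : Type*} [MeasurableSpace Ω] (P : Measure Ω) [IsProbabilityMeasure P]
    (f : H) (d : ℕ) (r : ℝ) (hr : 0 < r)
    (a b A B : ℝ) (ha : 0 < a) (hA : 0 ≤ A) (hB : 0 ≤ B)
    (m : ℕ) (hm : 1 ≤ m)
    (Nj : Fin m → ℕ) (hNj : ∀ j, 1 ≤ Nj j)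
    (n : ℝ)
    (hnlow : a * ((∑ j, Nj j : ℕ) : ℝ) ^ ((1 : ℝ) / (2 * r + d)) ≤ n)
    (hnhigh : n ≤ b * ((∑ j, Nj j : ℕ) : ℝ) ^ ((1 : ℝ) / (2 * r + d)))
    (g : Fin m → Ω → H)
    (hgindep : iIndepFun g P)
    (hgL2 : ∀ j, MemLp (g j) 2 P)
    (hvar : ∀ j, ∫ ω, ‖g j ω - f‖ ^ 2 ∂P ≤ A * n ^ (-(2 * r)) + B * n ^ d / (Nj j))
    (hbias : ∀ j, ‖(∫ ω, g j ω ∂P) - f‖ ^ 2 ≤ A * n ^ (-(2 * r))) :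
    ∫ ω, ‖(∑ j, ((Nj j : ℝ) / ((∑ j', Nj j' : ℕ) : ℝ)) • g j ω) - f‖ ^ 2 ∂P
      ≤ (2 * A * a ^ (-(2 * r)) + B * b ^ d) *
          ((∑ j, Nj j : ℕ) : ℝ) ^ (-(2 * r) / (2 * r + d)) := by
  have hNpos : (0 : ℝ) < ((∑ j, Nj j : ℕ) : ℝ) :=
    Nat.cast_pos.mpr <| Finset.sum_pos (fun j _ => hNj j) ⟨⟨0, hm⟩, Finset.mem_univ _⟩
  have hn : 0 < n := (mul_pos ha (Real.rpow_pos_of_pos hNpos _)).trans_le hnlow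
  have hw_sum : ∑ j, (Nj j : ℝ) / ((∑ j', Nj j' : ℕ) : ℝ) = 1 := by
    rw [← Finset.sum_div, ← Nat.cast_sum, div_self hNpos.ne']
  have hmse := integral_norm_sum_smul_sub_sq_le f (fun j => by positivity) hw_sum
    (fun i j hij => hgindep.indepFun hij) hgL2 hvar hbias
  rw [Nat.cast_sum, Finset.sum_div_sum_sq_mul_div, ← Nat.cast_sum, mul_div_assoc] at hmse
  have hbias_rate := Real.rpow_neg_le_of_mul_rpow_le_s13 ha hNpos (by positivity : 0 ≤ 2 * r) hnlow
  have hvar_rate := Real.pow_div_le_of_le_mul_rpow_s13 hNpos hn.le (by positivity) hnhigh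
  have hrate_nonneg : 0 ≤ A * a ^ (-(2 * r)) * ((∑ j, Nj j : ℕ) : ℝ) ^ (-(2 * r) / (2 * r + d)) :=
    by positivity
  calc _ ≤ A * n ^ (-(2 * r)) + B * (n ^ d / ((∑ j, Nj j : ℕ) : ℝ)) := hmse
    _ ≤ A * (a ^ (-(2 * r)) * ((∑ j, Nj j : ℕ) : ℝ) ^ (-(2 * r) / (2 * r + d)))
        + B * (b ^ d * ((∑ j, Nj j : ℕ) : ℝ) ^ (-(2 * r) / (2 * r + d))) := by gcongr
    _ ≤ _ := by linarith

/-- distributed filtered hyperinterpolation for noisy data with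
deterministic samples achieves the rate `N^{−2r/(2r+d)}`: for independent servers
`g_j` with per-server bounds `E[‖g_j − f‖²] ≤ A n^{−2r} + B n^d/N_j` and
`‖E[g_j] − f‖² ≤ A n^{−2r}`, and `a N^{1/(2r+d)} ≤ n ≤ b N^{1/(2r+d)}`,
`E[‖Σ_j (N_j/N) g_j − f‖²] ≤ (2A a^{−2r} + B b^d) N^{−2r/(2r+d)}`. -/
theorem distributed_noisy_deterministic_rate
    {H : Type*} [NormedAddCommGroup H] [InnerProductSpace ℝ H] [CompleteSpace H]
    [MeasurableSpace H] [BorelSpace H]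
    {Ω : Type*} [MeasurableSpace Ω] (P : Measure Ω) [IsProbabilityMeasure P]
    (f : H) (d : ℕ) (hd : 1 ≤ d) (r : ℝ) (hr : 0 < r)
    (a b A B : ℝ) (ha : 0 < a) (hab : a ≤ b) (hA : 0 ≤ A) (hB : 0 ≤ B)
    (m : ℕ) (hm : 1 ≤ m)
    (Nj : Fin m → ℕ) (hNj : ∀ j, 1 ≤ Nj j)
    (n : ℝ)
    (hnlow : a * ((∑ j, Nj j : ℕ) : ℝ) ^ ((1 : ℝ) / (2 * r + d)) ≤ n)
    (hnhigh : n ≤ b * ((∑ j, Nj j : ℕ) : ℝ) ^ ((1 : ℝ) / (2 * r + d)))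
    (g : Fin m → Ω → H)
    (hgmeas : ∀ j, Measurable (g j))
    (hgindep : iIndepFun g P)
    (hgL2 : ∀ j, MemLp (g j) 2 P)
    (hvar : ∀ j, ∫ ω, ‖g j ω - f‖ ^ 2 ∂P ≤ A * n ^ (-(2 * r)) + B * n ^ d / (Nj j))
    (hbias : ∀ j, ‖(∫ ω, g j ω ∂P) - f‖ ^ 2 ≤ A * n ^ (-(2 * r))) :
    ∫ ω, ‖(∑ j, ((Nj j : ℝ) / ((∑ j', Nj j' : ℕ) : ℝ)) • g j ω) - f‖ ^ 2 ∂P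
      ≤ (2 * A * a ^ (-(2 * r)) + B * b ^ d) *
          ((∑ j, Nj j : ℕ) : ℝ) ^ (-(2 * r) / (2 * r + d)) :=
  distributed_noisy_deterministic_rate_general P f d r hr a b A B ha hA hB m hm Nj hNj n hnlow
    hnhigh g hgindep hgL2 hvar hbias
end
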